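/- Let N ∈ ℕ with N ≥ 1 and d ∈ ℝ, and let a : ℕ → ℝ be the odd-parity QES coefficient sequence for parameters (N, d). Then a(N+1) = 0 if and only if det Q^{(N,N)}(d) = 0, where Q^{(N,N)}(d) is the N×N tridiagonal matrix defined in the context. (Thus the QES-compatible shifts d are exactly the zeros of the polynomial d ↦ det Q^{(N,N)}(d).) -/
import Mathlib


/-- The k×k tridiagonal matrix `Q^(N,k)(d)` of the odd-parity QES construction:
`Q i i = 2·(i+1)·d`, `Q i (i+1) = (i+1)·(i+2)`, `Q i (i-1) = 2·(N − i)`,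
all other entries `0`. -/
def Qmat (N : ℕ) (d : ℝ) (k : ℕ) : Matrix (Fin k) (Fin k) ℝ :=
  Matrix.of fun i j =>
    if (j : ℕ) = (i : ℕ) then 2 * ((i : ℝ) + 1) * d
    else if (j : ℕ) = (i : ℕ) + 1 then ((i : ℝ) + 1) * ((i : ℝ) + 2)
    else if (j : ℕ) + 1 = (i : ℕ) then 2 * ((N : ℝ) - (i : ℝ))
    else 0

lemma Qmat_mulVec (N : ℕ) (d : ℝ) (k : ℕ) (w : Fin k → ℝ) (i : Fin k) :
    (Qmat N d k).mulVec w i =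
      (if h : 0 < (i : ℕ) then 2 * ((N : ℝ) - (i : ℕ)) * w ⟨(i : ℕ) - 1, by omega⟩ else 0)
      + 2 * ((i : ℕ) + 1) * d * w i
      + (if h : (i : ℕ) + 1 < k then ((i : ℕ) + 1) * ((i : ℕ) + 2) * w ⟨(i : ℕ) + 1, h⟩ else 0) := by
  unfold Matrix.mulVec dotProduct Qmat
  simp only [Matrix.of_apply]
  have hsplit : ∀ j : Fin k,
      (if (j : ℕ) = (i : ℕ) then 2 * ((i : ℝ) + 1) * d
        else if (j : ℕ) = (i : ℕ) + 1 then ((i : ℝ) + 1) * ((i : ℝ) + 2)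
        else if (j : ℕ) + 1 = (i : ℕ) then 2 * ((N : ℝ) - (i : ℝ))
        else 0) * w j
      = (if (j : ℕ) + 1 = (i : ℕ) then 2 * ((N : ℝ) - (i : ℕ)) * w j else 0)
        + (if (j : ℕ) = (i : ℕ) then 2 * ((i : ℕ) + 1) * d * w j else 0)
        + (if (j : ℕ) = (i : ℕ) + 1 then ((i : ℕ) + 1) * ((i : ℕ) + 2) * w j else 0) := by
    intro j
    split_ifs <;> first | ring1 | (exfalso; omega)
  rw [Finset.sum_congr rfl fun j _ => hsplit j]
  rw [Finset.sum_add_distrib, Finset.sum_add_distrib]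
  congr 1
  congr 1
  · by_cases h : 0 < (i : ℕ)
    · rw [dif_pos h]
      rw [Finset.sum_eq_single (⟨(i : ℕ) - 1, by omega⟩ : Fin k)]
      · rw [if_pos (show ((i : ℕ) - 1) + 1 = (i : ℕ) by omega)]
      · intro b _ hb
        rw [if_neg]
        intro hc
        exact hb (by apply Fin.ext; simp only [Fin.val_mk]; omega)
      · intro h'; exact absurd (Finset.mem_univ _) h'
    · rw [dif_neg h]
      apply Finset.sum_eq_zero
      intro j _
      rw [if_neg (by omega)]
  · rw [Finset.sum_eq_single i]
    · rw [if_pos rfl]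
    · intro b _ hb
      rw [if_neg (fun hc => hb (Fin.ext hc))]
    · intro h'; exact absurd (Finset.mem_univ _) h'
  · by_cases h : (i : ℕ) + 1 < k
    · rw [dif_pos h]
      rw [Finset.sum_eq_single (⟨(i : ℕ) + 1, h⟩ : Fin k)]
      · rw [if_pos rfl]
      · intro b _ hb
        rw [if_neg]
        intro hc
        exact hb (Fin.ext hc)
      · intro h'; exact absurd (Finset.mem_univ _) h'
    · rw [dif_neg h]
      apply Finset.sum_eq_zero
      intro j _
      rw [if_neg (by omega)]

/-- The odd-parity QES quantization condition: the terminating solutions, i.e. the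
QES-compatible shifts `d`, are exactly the zeros of `d ↦ det Q^(N,N)(d)`. -/
theorem odd_parity_QES_quantization (N : ℕ) (hN : 1 ≤ N) (d : ℝ) (a : ℕ → ℝ)
    (h0 : a 0 = 0) (h1 : a 1 = 1)
    (hrec : ∀ n : ℕ, (2 * (N : ℝ) - 2 * n) * a n + 2 * d * (n + 1) * a (n + 1)
      + (n + 1) * (n + 2) * a (n + 2) = 0) :
    a (N + 1) = 0 ↔ (Qmat N d N).det = 0 := by
  have h0N : 0 < N := hN
  rw [← Matrix.exists_mulVec_eq_zero_iff]
  constructor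
  · intro hA
    refine ⟨fun j => a ((j : ℕ) + 1), ?_, ?_⟩
    · intro hv
      have h := congrFun hv ⟨0, h0N⟩
      simp only [Pi.zero_apply] at h
      rw [h1] at h
      exact one_ne_zero h
    · funext i
      rw [Qmat_mulVec]
      simp only [Pi.zero_apply]
      by_cases hlt : (i : ℕ) + 1 < N
      · rw [dif_pos hlt]
        by_cases hpos : 0 < (i : ℕ)
        · rw [dif_pos hpos]
          show 2 * ((N : ℝ) - (i : ℕ)) * a ((i : ℕ) - 1 + 1) + _ + _ = 0
          rw [show (i : ℕ) - 1 + 1 = (i : ℕ) by omega,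
            show (i : ℕ) + 1 + 1 = (i : ℕ) + 2 by omega]
          linear_combination hrec (i : ℕ)
        · rw [dif_neg hpos]
          have hi0 : (i : ℕ) = 0 := by omega
          rw [hi0]
          norm_num
          linear_combination hrec 0 - 2 * (N : ℝ) * h0
      · rw [dif_neg hlt]
        by_cases hpos : 0 < (i : ℕ)
        · rw [dif_pos hpos]
          show 2 * ((N : ℝ) - (i : ℕ)) * a ((i : ℕ) - 1 + 1) + _ + _ = 0
          rw [show (i : ℕ) - 1 + 1 = (i : ℕ) by omega]
          have e : (i : ℕ) + 2 = N + 1 := by omega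
          have R := hrec (i : ℕ)
          rw [e, hA] at R
          linear_combination R
        · rw [dif_neg hpos]
          have hi0 : (i : ℕ) = 0 := by omega
          have hN1 : N = 1 := by omega
          have ha2 : a 2 = 0 := by rw [hN1] at hA; exact hA
          rw [hi0]
          push_cast
          linear_combination hrec 0 - 2 * (N : ℝ) * h0 - 2 * ha2
  · rintro ⟨w, hw, hmul⟩
    have key : ∀ m, ∀ hm : m < N, w ⟨m, hm⟩ = w ⟨0, h0N⟩ * a (m + 1) := by
      intro m
      induction m using Nat.strong_induction_on with
      | _ m ih =>
        intro hm
        match m with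
        | 0 => rw [h1, mul_one]
        | (m' + 1) =>
          have hm' : m' < N := by omega
          have E := congrFun hmul ⟨m', hm'⟩
          rw [Qmat_mulVec] at E
          simp only [Pi.zero_apply, Fin.val_mk] at E
          rw [dif_pos (show m' + 1 < N from hm)] at E
          have hwm := ih m' (by omega) hm'
          have hne : ((m' : ℝ) + 1) * ((m' : ℝ) + 2) ≠ 0 := by positivity
          apply mul_left_cancel₀ hne
          by_cases hpos : 0 < m'
          · rw [dif_pos hpos] at E
            have hwsub := ih (m' - 1) (by omega) (by omega)
            rw [show m' - 1 + 1 = m' by omega] at hwsub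
            rw [hwsub, hwm] at E
            have R := hrec m'
            rw [show m' + 2 = m' + 1 + 1 by omega] at R
            linear_combination E - w ⟨0, h0N⟩ * R
          · rw [dif_neg hpos] at E
            have hm0 : m' = 0 := by omega
            subst hm0
            rw [hwm] at E
            push_cast at E ⊢
            linear_combination E - w ⟨0, h0N⟩ * hrec 0 + 2 * (N : ℝ) * w ⟨0, h0N⟩ * h0
    have hw0ne : w ⟨0, h0N⟩ ≠ 0 := by
      intro hz
      apply hw
      funext j
      have h := key (j : ℕ) j.isLt
      rw [hz, zero_mul] at h
      simpa using h
    have hNlt : N - 1 < N := by omega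
    have E := congrFun hmul ⟨N - 1, hNlt⟩
    rw [Qmat_mulVec] at E
    simp only [Pi.zero_apply, Fin.val_mk] at E
    rw [dif_neg (show ¬(N - 1 + 1 < N) by omega)] at E
    by_cases h2 : 2 ≤ N
    · rw [dif_pos (show 0 < N - 1 by omega)] at E
      have hk1 := key (N - 1 - 1) (by omega)
      have hk2 := key (N - 1) hNlt
      rw [show N - 1 - 1 + 1 = N - 1 by omega] at hk1
      rw [show N - 1 + 1 = N by omega] at hk2
      rw [hk1, hk2] at E
      have R := hrec (N - 1)
      rw [show N - 1 + 1 = N by omega, show N - 1 + 2 = N + 1 by omega] at R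
      rw [Nat.cast_sub hN] at E R
      have hkey : w ⟨0, h0N⟩ * (((N : ℝ) - 1 + 1) * ((N : ℝ) - 1 + 2)) * a (N + 1) = 0 := by
        linear_combination -E + w ⟨0, h0N⟩ * R
      have hne : w ⟨0, h0N⟩ * (((N : ℝ) - 1 + 1) * ((N : ℝ) - 1 + 2)) ≠ 0 := by
        apply mul_ne_zero hw0ne
        have h1N : (1 : ℝ) ≤ (N : ℝ) := by exact_mod_cast hN
        apply ne_of_gt
        nlinarith
      exact (mul_eq_zero.mp hkey).resolve_left hne
    · rw [dif_neg (show ¬(0 < N - 1) by omega)] at E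
      have hN1 : N = 1 := by omega
      subst hN1
      norm_num at E
      have hd0 : d = 0 := by
        rcases E with h | h
        · exact h
        · exact absurd h hw0ne
      have R := hrec 0
      rw [h0, hd0] at R
      norm_num at R ⊢
      exact R
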